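/- Let (Ā, B̄) be an interconnected structural system with subsystems (Ā_1, B̄_1), …, (Ā_r, B̄_r) and interconnection patterns Ē_{i,j}. Let M_i be a matching of the system bipartite graph B(Ā_i, B̄_i) for each i, and let M' be a matching of the bipartite graph whose left vertices are ⋃_i U_L(M_i), whose right vertices are ⋃_i U_R(M_i), and whose edges go from a left-unmatched state vertex x_l of subsystem j to a right-unmatched state vertex x_k of subsystem i (i ≠ j) whenever (Ē_{i,j})_{k,l} = 1. Then M = (⋃_i M_i) ∪ M' is a matching of the overall system bipartite graph B(Ā, B̄), and the set of right-unmatched vertices of M equals the set of right-unmatched vertices of M'. In particular, if M' has no right-unmatched vertices, then B(Ā, B̄) has a matching with no right-unmatched vertices. -/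
import Mathlib


open Matrix

/-- Controllability matrix `[B, AB, …, A^{n-1}B]` (columns indexed by `Fin (card X) × U`). -/
def ctrbMatrix {X U : Type*} [Fintype X] [DecidableEq X]
    (A : Matrix X X ℝ) (B : Matrix X U ℝ) :
    Matrix X (Fin (Fintype.card X) × U) ℝ :=
  fun i kj => (A ^ (kj.1 : ℕ) * B) i kj.2

/-- A real pair `(A,B)` is controllable if its controllability matrix has full rank. -/
def Controllable {X U : Type*} [Fintype X] [DecidableEq X] [Fintype U]
    (A : Matrix X X ℝ) (B : Matrix X U ℝ) : Prop :=
  (ctrbMatrix A B).rank = Fintype.card X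

/-- `M` has the same sparsity pattern as the Boolean matrix `Mb`. -/
def SameSparsity {X Y : Type*} (M : Matrix X Y ℝ) (Mb : Matrix X Y Bool) : Prop :=
  ∀ i j, M i j = 0 ↔ Mb i j = false

/-- Structural controllability of a structural (Boolean) pair. -/
def StructurallyControllable {X U : Type*} [Fintype X] [DecidableEq X] [Fintype U]
    (Ab : Matrix X X Bool) (Bb : Matrix X U Bool) : Prop :=
  ∃ A : Matrix X X ℝ, ∃ B : Matrix X U ℝ,
    SameSparsity A Ab ∧ SameSparsity B Bb ∧ Controllable A B

/-- Edge relation of the system digraph `D(Ā,B̄)`. -/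
def sysDigraphRel {X U : Type*} (Ab : Matrix X X Bool) (Bb : Matrix X U Bool) :
    (X ⊕ U) → (X ⊕ U) → Prop :=
  fun v w => match v, w with
  | Sum.inl j, Sum.inl i => Ab i j = true
  | Sum.inr k, Sum.inl i => Bb i k = true
  | _, Sum.inr _ => False

/-- A state vertex is input-reachable if some input vertex has a directed path to it. -/
def InputReachable {X U : Type*} (Ab : Matrix X X Bool) (Bb : Matrix X U Bool) (x : X) : Prop :=
  ∃ u : U, Relation.ReflTransGen (sysDigraphRel Ab Bb) (Sum.inr u) (Sum.inl x)

/-- Edge relation of the system bipartite graph `B(Ā,B̄)` (left = states ⊕ inputs, right = states). -/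
def sysBipEdge {X U : Type*} (Ab : Matrix X X Bool) (Bb : Matrix X U Bool) :
    (X ⊕ U) → X → Prop :=
  fun v i => match v with
  | Sum.inl j => Ab i j = true
  | Sum.inr k => Bb i k = true

/-- Edge relation of the state bipartite graph `B(Ā)`. -/
def stateBipEdge {X : Type*} (Ab : Matrix X X Bool) : X → X → Prop :=
  fun j i => Ab i j = true

/-- A matching of a bipartite graph with edge relation `E`: a set of edges sharing no
left vertex and no right vertex. -/
def IsMatching {α β : Type*} (E : α → β → Prop) (M : Set (α × β)) : Prop :=
  (∀ e ∈ M, E e.1 e.2) ∧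
  (∀ e ∈ M, ∀ f ∈ M, e.1 = f.1 → e = f) ∧
  (∀ e ∈ M, ∀ f ∈ M, e.2 = f.2 → e = f)

/-- Right vertices belonging to no edge of `M`. -/
def rightUnmatched {α β : Type*} (M : Set (α × β)) : Set β :=
  {b | ∀ e ∈ M, e.2 ≠ b}

/-- Left vertices belonging to no edge of `M`. -/
def leftUnmatched {α β : Type*} (M : Set (α × β)) : Set α :=
  {a | ∀ e ∈ M, e.1 ≠ a}

/-- A maximum matching: a matching of the largest cardinality. -/
def IsMaxMatching {α β : Type*} (E : α → β → Prop) (M : Set (α × β)) : Prop :=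
  IsMatching E M ∧ ∀ M' : Set (α × β), IsMatching E M' → M'.ncard ≤ M.ncard

/-- `S` is a strongly connected component of the digraph with edge relation `R`. -/
def IsSCC {V : Type*} (R : V → V → Prop) (S : Set V) : Prop :=
  S.Nonempty ∧ (∀ u ∈ S, ∀ v ∈ S, Relation.ReflTransGen R u v) ∧
  ∀ w : V, (∀ u ∈ S, Relation.ReflTransGen R u w ∧ Relation.ReflTransGen R w u) → w ∈ S

/-- An SCC is non-top linked if it has no incoming edge from outside. -/
def NonTopLinked {V : Type*} (R : V → V → Prop) (S : Set V) : Prop :=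
  ∀ u v : V, R u v → v ∈ S → u ∈ S

/-- Dynamics pattern `(I_r ⊗ Ā') ∨ (Ē ⊗ H̄)` of a system of `r` similar subsystems. -/
def simA {n : ℕ} (r : ℕ) (A' H : Matrix (Fin n) (Fin n) Bool)
    (E : Matrix (Fin r) (Fin r) Bool) :
    Matrix (Fin r × Fin n) (Fin r × Fin n) Bool :=
  fun q q' => ((if q.1 = q'.1 then A' q.2 q'.2 else false) || (E q.1 q'.1 && H q.2 q'.2))

/-- Input pattern `I_r ⊗ B̄'` of a system of `r` similar subsystems. -/
def simB {n p : ℕ} (r : ℕ) (B' : Matrix (Fin n) (Fin p) Bool) :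
    Matrix (Fin r × Fin n) (Fin r × Fin p) Bool :=
  fun q k => if q.1 = k.1 then B' q.2 k.2 else false

/-- Entrywise OR of Boolean matrices. -/
def orMat {X Y : Type*} (M N : Matrix X Y Bool) : Matrix X Y Bool :=
  fun i j => M i j || N i j

/-- Dynamics pattern of an interconnected system: diagonal blocks `Ā_i`,
off-diagonal blocks `Ē_{i,j}`. -/
def interA {r : ℕ} {n : Fin r → ℕ}
    (A : ∀ i, Matrix (Fin (n i)) (Fin (n i)) Bool)
    (E : ∀ i j, Matrix (Fin (n i)) (Fin (n j)) Bool) :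
    Matrix (Σ i, Fin (n i)) (Σ i, Fin (n i)) Bool :=
  fun q q' => if h : q'.1 = q.1 then A q.1 q.2 (h ▸ q'.2) else E q.1 q'.1 q.2 q'.2

/-- Input pattern of an interconnected system: block diagonal with blocks `B̄_i`. -/
def interB {r : ℕ} {n p : Fin r → ℕ}
    (B : ∀ i, Matrix (Fin (n i)) (Fin (p i)) Bool) :
    Matrix (Σ i, Fin (n i)) (Σ i, Fin (p i)) Bool :=
  fun q k => if h : k.1 = q.1 then B q.1 q.2 (h ▸ k.2) else false

/-- Cross edge relation (on state vertices) between distinct subsystems, joining the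
left-unmatched state vertices of the matchings `M j` to the right-unmatched state vertices
of the matchings `M i`, for matchings `M i` of the subsystem system bipartite graphs. -/
def crossEdgeSys {r : ℕ} {n p : Fin r → ℕ}
    (E : ∀ i j, Matrix (Fin (n i)) (Fin (n j)) Bool)
    (M : ∀ i, Set ((Fin (n i) ⊕ Fin (p i)) × Fin (n i))) :
    (Σ i, Fin (n i)) → (Σ i, Fin (n i)) → Prop :=
  fun l k => k.1 ≠ l.1 ∧ (Sum.inl l.2 : Fin (n l.1) ⊕ Fin (p l.1)) ∈ leftUnmatched (M l.1) ∧
    k.2 ∈ rightUnmatched (M k.1) ∧ E k.1 l.1 k.2 l.2 = true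

/-- the union of matchings `M i` of the subsystem bipartite graphs
`B(Ā_i, B̄_i)` with a matching `M'` of the auxiliary bipartite graph on the unmatched
vertices is a matching `M` of the overall system bipartite graph `B(Ā, B̄)`, whose
right-unmatched vertices are exactly the right-unmatched vertices of `M'` (relative to the
right vertex set `⋃ᵢ U_R(M i)` of the auxiliary graph).  In particular, if `M'` has no
right-unmatched vertices then `B(Ā, B̄)` has a matching with no right-unmatched vertices. -/
theorem interconnected_union_matching
    {r : ℕ} {n p : Fin r → ℕ}
    (A : ∀ i, Matrix (Fin (n i)) (Fin (n i)) Bool)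
    (B : ∀ i, Matrix (Fin (n i)) (Fin (p i)) Bool)
    (E : ∀ i j, Matrix (Fin (n i)) (Fin (n j)) Bool)
    (M : ∀ i, Set ((Fin (n i) ⊕ Fin (p i)) × Fin (n i)))
    (hM : ∀ i, IsMatching (sysBipEdge (A i) (B i)) (M i))
    (M' : Set ((Σ i, Fin (n i)) × (Σ i, Fin (n i))))
    (hM' : IsMatching (crossEdgeSys E M) M') :
    (IsMatching (sysBipEdge (interA A E) (interB B))
        ((⋃ i, (fun e : (Fin (n i) ⊕ Fin (p i)) × Fin (n i) =>
            ((Sum.map (Sigma.mk i) (Sigma.mk i) e.1 :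
                (Σ j, Fin (n j)) ⊕ (Σ j, Fin (p j))), (⟨i, e.2⟩ : Σ j, Fin (n j)))) '' M i) ∪
          ((fun e : (Σ i, Fin (n i)) × (Σ i, Fin (n i)) =>
            ((Sum.inl e.1 : (Σ j, Fin (n j)) ⊕ (Σ j, Fin (p j))), e.2)) '' M')) ∧
      rightUnmatched
        ((⋃ i, (fun e : (Fin (n i) ⊕ Fin (p i)) × Fin (n i) =>
            ((Sum.map (Sigma.mk i) (Sigma.mk i) e.1 :
                (Σ j, Fin (n j)) ⊕ (Σ j, Fin (p j))), (⟨i, e.2⟩ : Σ j, Fin (n j)))) '' M i) ∪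
          ((fun e : (Σ i, Fin (n i)) × (Σ i, Fin (n i)) =>
            ((Sum.inl e.1 : (Σ j, Fin (n j)) ⊕ (Σ j, Fin (p j))), e.2)) '' M')) =
        {q : Σ i, Fin (n i) | q.2 ∈ rightUnmatched (M q.1)} ∩ rightUnmatched M') ∧
    ((∀ q : Σ i, Fin (n i), q.2 ∈ rightUnmatched (M q.1) → q ∉ rightUnmatched M') →
      ∃ N : Set (((Σ i, Fin (n i)) ⊕ (Σ i, Fin (p i))) × (Σ i, Fin (n i))),
        IsMatching (sysBipEdge (interA A E) (interB B)) N ∧ rightUnmatched N = ∅) := by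
  classical
  set Nset : Set (((Σ i, Fin (n i)) ⊕ (Σ i, Fin (p i))) × (Σ i, Fin (n i))) :=
    ((⋃ i, (fun e : (Fin (n i) ⊕ Fin (p i)) × Fin (n i) =>
        ((Sum.map (Sigma.mk i) (Sigma.mk i) e.1 :
            (Σ j, Fin (n j)) ⊕ (Σ j, Fin (p j))), (⟨i, e.2⟩ : Σ j, Fin (n j)))) '' M i) ∪
      ((fun e : (Σ i, Fin (n i)) × (Σ i, Fin (n i)) =>
        ((Sum.inl e.1 : (Σ j, Fin (n j)) ⊕ (Σ j, Fin (p j))), e.2)) '' M')) with hNset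
  have hmem : ∀ f, f ∈ Nset ↔
      (∃ i, ∃ e ∈ M i, f = ((Sum.map (Sigma.mk i) (Sigma.mk i) e.1 :
            (Σ j, Fin (n j)) ⊕ (Σ j, Fin (p j))), (⟨i, e.2⟩ : Σ j, Fin (n j)))) ∨
      (∃ e ∈ M', f = ((Sum.inl e.1 : (Σ j, Fin (n j)) ⊕ (Σ j, Fin (p j))), e.2)) := by
    intro f
    simp only [hNset, Set.mem_union, Set.mem_iUnion, Set.mem_image]
    constructor
    · rintro (⟨i, e, he, rfl⟩ | ⟨e, he, rfl⟩)
      · exact Or.inl ⟨i, e, he, rfl⟩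
      · exact Or.inr ⟨e, he, rfl⟩
    · rintro (⟨i, e, he, rfl⟩ | ⟨e, he, rfl⟩)
      · exact Or.inl ⟨i, e, he, rfl⟩
      · exact Or.inr ⟨e, he, rfl⟩
  have hmatch : IsMatching (sysBipEdge (interA A E) (interB B)) Nset := by
    refine ⟨?_, ?_, ?_⟩
    · intro f hf
      rcases (hmem f).1 hf with ⟨i, e, he, rfl⟩ | ⟨e, he, rfl⟩
      · have hedge := (hM i).1 e he
        rcases e with ⟨v, x⟩
        cases v with
        | inl j =>
          have : A i x j = true := hedge
          show interA A E ⟨i, x⟩ ⟨i, j⟩ = true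
          simpa [interA] using this
        | inr k =>
          have : B i x k = true := hedge
          show interB B ⟨i, x⟩ ⟨i, k⟩ = true
          simpa [interB] using this
      · obtain ⟨hne, _, _, hE⟩ := hM'.1 e he
        show interA A E e.2 e.1 = true
        rw [interA, dif_neg (fun h => hne (by rw [h]))]
        exact hE
    · intro f hf g hg hfg
      rcases (hmem f).1 hf with ⟨i, e, he, rfl⟩ | ⟨e, he, rfl⟩ <;>
        rcases (hmem g).1 hg with ⟨i', e', he', rfl⟩ | ⟨e', he', rfl⟩
      · rcases e with ⟨v, x⟩; rcases e' with ⟨v', x'⟩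
        simp only at hfg
        cases v with
        | inl j =>
          cases v' with
          | inl j' =>
            simp only [Sum.map_inl, Sum.inl.injEq] at hfg
            obtain ⟨rfl, hj⟩ := Sigma.mk.inj_iff.mp hfg
            obtain rfl : j = j' := eq_of_heq hj
            have := (hM i).2.1 _ he _ he' rfl
            simp only [Prod.mk.injEq] at this
            simp [this.2]
          | inr k' => simp at hfg
        | inr k =>
          cases v' with
          | inl j' => simp at hfg
          | inr k' =>
            simp only [Sum.map_inr, Sum.inr.injEq] at hfg
            obtain ⟨rfl, hk⟩ := Sigma.mk.inj_iff.mp hfg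
            obtain rfl : k = k' := eq_of_heq hk
            have := (hM i).2.1 _ he _ he' rfl
            simp only [Prod.mk.injEq] at this
            simp [this.2]
      · exfalso
        rcases e with ⟨v, x⟩
        simp only at hfg
        cases v with
        | inl j =>
          obtain ⟨_, hL, _, _⟩ := hM'.1 e' he'
          rcases e' with ⟨⟨a, y⟩, z⟩
          simp only [Sum.map_inl, Sum.inl.injEq] at hfg
          obtain ⟨rfl, hy⟩ := Sigma.mk.inj_iff.mp hfg
          exact hL (Sum.inl j, x) he (by simp [eq_of_heq hy])
        | inr k => simp at hfg
      · exfalso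
        rcases e' with ⟨v', x'⟩
        simp only at hfg
        cases v' with
        | inl j' =>
          obtain ⟨_, hL, _, _⟩ := hM'.1 e he
          rcases e with ⟨⟨a, y⟩, z⟩
          simp only [Sum.map_inl, Sum.inl.injEq] at hfg
          obtain ⟨rfl, hy⟩ := Sigma.mk.inj_iff.mp hfg.symm
          exact hL (Sum.inl j', x') he' (by simp [eq_of_heq hy])
        | inr k' => simp at hfg
      · simp only [Sum.inl.injEq] at hfg
        have := hM'.2.1 e he e' he' hfg
        rw [this]
    · intro f hf g hg hfg
      rcases (hmem f).1 hf with ⟨i, e, he, rfl⟩ | ⟨e, he, rfl⟩ <;>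
        rcases (hmem g).1 hg with ⟨i', e', he', rfl⟩ | ⟨e', he', rfl⟩
      · simp only at hfg
        obtain ⟨rfl, h2⟩ := Sigma.mk.inj_iff.mp hfg
        obtain h2 : e.2 = e'.2 := eq_of_heq h2
        have := (hM i).2.2 _ he _ he' h2
        rw [this]
      · exfalso
        obtain ⟨_, _, hR, _⟩ := hM'.1 e' he'
        rcases e' with ⟨y, ⟨a, z⟩⟩
        simp only at hfg hR
        obtain ⟨rfl, hz⟩ := Sigma.mk.inj_iff.mp hfg
        exact hR e he (eq_of_heq hz)
      · exfalso
        obtain ⟨_, _, hR, _⟩ := hM'.1 e he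
        rcases e with ⟨y, ⟨a, z⟩⟩
        simp only at hfg hR
        obtain ⟨rfl, hz⟩ := Sigma.mk.inj_iff.mp hfg.symm
        exact hR e' he' (eq_of_heq hz)
      · simp only at hfg
        have := hM'.2.2 e he e' he' hfg
        rw [this]
  have hru : rightUnmatched Nset =
      {q : Σ i, Fin (n i) | q.2 ∈ rightUnmatched (M q.1)} ∩ rightUnmatched M' := by
    ext q
    simp only [rightUnmatched, Set.mem_setOf_eq, Set.mem_inter_iff]
    constructor
    · intro h
      constructor
      · intro e he hq
        rcases q with ⟨a, x⟩
        exact h _ ((hmem _).2 (Or.inl ⟨a, e, he, rfl⟩)) (by simp [hq])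
      · intro e he hq
        exact h _ ((hmem _).2 (Or.inr ⟨e, he, rfl⟩)) hq
    · rintro ⟨h1, h2⟩ f hf hq
      rcases (hmem f).1 hf with ⟨i, e, he, rfl⟩ | ⟨e, he, rfl⟩
      · simp only at hq
        rcases q with ⟨a, x⟩
        obtain ⟨rfl, h3⟩ := Sigma.mk.inj_iff.mp hq
        exact h1 e he (eq_of_heq h3)
      · exact h2 e he hq
  refine ⟨⟨hmatch, hru⟩, ?_⟩
  intro hcover
  refine ⟨Nset, hmatch, ?_⟩
  rw [hru]
  ext q
  simp only [Set.mem_inter_iff, Set.mem_setOf_eq, Set.mem_empty_iff_false, iff_false]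
  rintro ⟨h1, h2⟩
  exact hcover q h1 h2
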